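/- For every integer r ≥ 1, the following identity holds in ℚ(q), with E = q^8−q^6−q^5+q^3 and P = (q−1)^r − 3^r: P·E/((q^2−1)(q^2−q)) + P(q^r−1)q^(2r)·E/((q−1)^2 q^3) + P(q^r−q)·E/((q−1)^2 q^2) + P(q^r−q)(q^r−q^2)·E/((q^2−1)(q^2−q)q^2) + P(q^r−1)(q^r−q)q^r·E/((q−1)^2 q^3) + P(q^r−1)(q^r−q)·E/((q−1)^2 q^2) + P(q^r−q)·E/((q−1)^2 q^2) + P(q^r−q)(q^r−q^2)·E/((q^2−q)(q^2−1)q^2) + P(q^r−q)^2 q^r·E/((q−1)^2 q^3) = P·(q^2+q+1)·(3q^(3r+1) + 3q^(3r) − 2q^(2r+2) − 4q^(2r+1) + q^3). (This is the computation of the E-polynomial e(R_2) of the stratum of reducible representations of F_r in SL(3,ℂ) whose matrices have eigenvalue pattern (λ_i, λ_i, μ_i) with (λ_i) not all cube roots of unity.) -/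

import Mathlib

/-- The variable `q`, viewed as a rational function in `ℚ(q)`. -/
noncomputable def q : RatFunc ℚ := RatFunc.X

/-- `E = e(PGL(3,ℂ))`. -/
noncomputable def E : RatFunc ℚ := q^8 - q^6 - q^5 + q^3

/-- `P`, the E-polynomial of the parameter space of eigenvalues for the
stratum `R_2`. -/
noncomputable def P (r : ℕ) : RatFunc ℚ := (q - 1)^r - 3^r

open Polynomial in
lemma q_sub_ratCast_ne_zero (c : ℚ) : q - (c : RatFunc ℚ) ≠ 0 := by
  have h : q - (c : RatFunc ℚ) = algebraMap ℚ[X] (RatFunc ℚ) (X - C c) := by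
    simp [q, RatFunc.algebraMap_C]
  rw [h, Ne, map_eq_zero_iff _ (IsFractionRing.injective ℚ[X] (RatFunc ℚ))]
  exact X_sub_C_ne_zero c

lemma q_ne_zero : q ≠ 0 := RatFunc.X_ne_zero

lemma q_sub_one_ne_zero : q - 1 ≠ 0 := by
  simpa using q_sub_ratCast_ne_zero 1

lemma q_add_one_ne_zero : q + 1 ≠ 0 := by
  simpa using q_sub_ratCast_ne_zero (-1)

-- Every denominator of the sum divides this factorisation.
lemma E_eq : E = q^3 * (q - 1)^2 * (q + 1) * (q^2 + q + 1) := by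
  rw [E]; ring

theorem e_R2_stratum_general (r : ℕ) :
    P r * E / ((q^2 - 1) * (q^2 - q))
      + P r * (q^r - 1) * q^(2*r) * E / ((q - 1)^2 * q^3)
      + P r * (q^r - q) * E / ((q - 1)^2 * q^2)
      + P r * (q^r - q) * (q^r - q^2) * E / ((q^2 - 1) * (q^2 - q) * q^2)
      + P r * (q^r - 1) * (q^r - q) * q^r * E / ((q - 1)^2 * q^3)
      + P r * (q^r - 1) * (q^r - q) * E / ((q - 1)^2 * q^2)
      + P r * (q^r - q) * E / ((q - 1)^2 * q^2)
      + P r * (q^r - q) * (q^r - q^2) * E / ((q^2 - q) * (q^2 - 1) * q^2)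
      + P r * (q^r - q)^2 * q^r * E / ((q - 1)^2 * q^3)
    = P r * (q^2 + q + 1)
        * (3 * q^(3*r+1) + 3 * q^(3*r) - 2 * q^(2*r+2) - 4 * q^(2*r+1) + q^3) := by
  have := q_ne_zero
  have := q_sub_one_ne_zero
  have := q_add_one_ne_zero
  have hq_sq_sub_one : q^2 - 1 = (q - 1) * (q + 1) := by ring
  have hq_sq_sub_q : q^2 - q = q * (q - 1) := by ring
  rw [hq_sq_sub_one, hq_sq_sub_q, E_eq]
  field_simp
  ring

/-- Computation of `e(R_2)`, the E-polynomial of the stratum of reducible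
representations of `F_r` in `SL(3,ℂ)` whose matrices have eigenvalue pattern
`(λ_i, λ_i, μ_i)`, as a sum of the substrata `R_{21}, ..., R_{29}`. -/
theorem e_R2_stratum (r : ℕ) (hr : 1 ≤ r) :
    P r * E / ((q^2 - 1) * (q^2 - q))
      + P r * (q^r - 1) * q^(2*r) * E / ((q - 1)^2 * q^3)
      + P r * (q^r - q) * E / ((q - 1)^2 * q^2)
      + P r * (q^r - q) * (q^r - q^2) * E / ((q^2 - 1) * (q^2 - q) * q^2)
      + P r * (q^r - 1) * (q^r - q) * q^r * E / ((q - 1)^2 * q^3)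
      + P r * (q^r - 1) * (q^r - q) * E / ((q - 1)^2 * q^2)
      + P r * (q^r - q) * E / ((q - 1)^2 * q^2)
      + P r * (q^r - q) * (q^r - q^2) * E / ((q^2 - q) * (q^2 - 1) * q^2)
      + P r * (q^r - q)^2 * q^r * E / ((q - 1)^2 * q^3)
    = P r * (q^2 + q + 1)
        * (3 * q^(3*r+1) + 3 * q^(3*r) - 2 * q^(2*r+2) - 4 * q^(2*r+1) + q^3) :=
  e_R2_stratum_general r
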